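/- arXiv:2509.03144 — 5 statements merged into one kernel-verified Lean document; each statement's English description precedes it below -/
import Mathlib

section
/- For every n ≥ 1, the path graph P_n on n vertices satisfies b(P_n) = ⌈√n⌉. -/
open SimpleGraph

/-- A burning sequence of length `k` for `G` is a sequence `x₁, …, x_k` of vertices
(indexed by `Fin k`, so `x i` is `x_{i+1}`) such that every vertex lies within graph
distance `k - (i+1)` of some `x_{i+1}`. -/
def IsBurningSequence {V : Type*} (G : SimpleGraph V) {k : ℕ} (x : Fin k → V) : Prop :=
  ∀ v : V, ∃ i : Fin k, G.dist (x i) v ≤ k - 1 - i.val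

/-- The burning number of `G`: the minimum length of a burning sequence for `G`. -/
noncomputable def burningNumber {V : Type*} (G : SimpleGraph V) : ℕ :=
  sInf {k | ∃ x : Fin k → V, IsBurningSequence G x}

lemma pathGraph_connected' {n : ℕ} (u : Fin n) : (pathGraph n).Connected := by
  have : Nonempty (Fin n) := ⟨u⟩
  exact ⟨pathGraph_preconnected n⟩

lemma natDist_le_walk_length {n : ℕ} {u v : Fin n} (p : (pathGraph n).Walk u v) :
    Nat.dist u.val v.val ≤ p.length := by
  induction p with
  | nil => simp [Nat.dist_self]
  | @cons a b c h p ih =>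
    have h1 : a.val + 1 = b.val ∨ b.val + 1 = a.val := pathGraph_adj.mp h
    have : Nat.dist a.val c.val ≤ Nat.dist a.val b.val + Nat.dist b.val c.val :=
      Nat.dist.triangle_inequality _ _ _
    have h2 : Nat.dist a.val b.val = 1 := by
      simp only [Nat.dist]; omega
    simp only [SimpleGraph.Walk.length_cons]
    omega

lemma dist_le_of_add {n : ℕ} (d : ℕ) : ∀ (u v : Fin n), v.val = u.val + d →
    (pathGraph n).dist u v ≤ d := by
  induction d with
  | zero => intro u v h; have : u = v := Fin.ext (by omega); simp [this, SimpleGraph.dist_self]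
  | succ d ih =>
    intro u v h
    have hw : u.val + 1 < n := by omega
    set w : Fin n := ⟨u.val + 1, hw⟩ with hwdef
    have hadj : (pathGraph n).Adj u w := pathGraph_adj.mpr (Or.inl rfl)
    have h1 : (pathGraph n).dist u w = 1 := dist_eq_one_iff_adj.mpr hadj
    have h2 : (pathGraph n).dist w v ≤ d := ih w v (by simp [hwdef]; omega)
    have := (pathGraph_connected' u).dist_triangle (u := u) (v := w) (w := v)
    omega

lemma pathGraph_dist {n : ℕ} (u v : Fin n) :
    (pathGraph n).dist u v = Nat.dist u.val v.val := by
  apply le_antisymm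
  · rcases le_total u.val v.val with h | h
    · have := dist_le_of_add (v.val - u.val) u v (by omega)
      simp only [Nat.dist]; omega
    · have := dist_le_of_add (u.val - v.val) v u (by omega)
      rw [SimpleGraph.dist_comm]
      simp only [Nat.dist]; omega
  · obtain ⟨p, hp⟩ := ((pathGraph_connected' u).exists_walk_length_eq_dist u v)
    have := natDist_le_walk_length p
    omega

lemma burn_exists {n k : ℕ} (hn : 1 ≤ n) (hk : 1 ≤ k) (hnk : n ≤ k ^ 2) :
    ∃ x : Fin k → Fin n, IsBurningSequence (pathGraph n) x := by
  refine ⟨fun i => ⟨min (n - 1) (k ^ 2 - (k - i.val) ^ 2 + (k - 1 - i.val)), by omega⟩,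
    fun v => ?_⟩
  have hK : k * k = k ^ 2 := (pow_two k).symm
  have hkk : 1 ≤ k * k := Nat.mul_le_mul hk hk
  have hv : v.val < n := v.isLt
  set t := k ^ 2 - 1 - v.val with ht
  set s := Nat.sqrt t with hs
  have h1 : s ^ 2 ≤ t := Nat.sqrt_le' t
  have h2 : t < (s + 1) ^ 2 := Nat.lt_succ_sqrt' t
  have hsk : s < k := by
    rw [hs, Nat.sqrt_lt']
    omega
  refine ⟨⟨k - 1 - s, by omega⟩, ?_⟩
  simp only [pathGraph_dist, Nat.dist]
  have hC : k - (k - 1 - s) = s + 1 := by omega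
  have hD : (k - (k - 1 - s)) ^ 2 = s * s + 2 * s + 1 := by rw [hC]; ring
  have hF : s ^ 2 = s * s := by ring
  have hG : (s + 1) ^ 2 = s * s + 2 * s + 1 := by ring
  omega

lemma sum_odd : ∀ k : ℕ, ∑ i ∈ Finset.range k, (2 * i + 1) = k ^ 2 := by
  intro k
  induction k with
  | zero => simp
  | succ m ih => rw [Finset.sum_range_succ, ih]; ring

lemma burn_card {n k : ℕ} (x : Fin k → Fin n) (hx : IsBurningSequence (pathGraph n) x) :
    n ≤ k ^ 2 := by
  classical
  have hsub : (Finset.univ : Finset (Fin n)) ⊆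
      Finset.univ.biUnion (fun i : Fin k =>
        Finset.univ.filter (fun v : Fin n => Nat.dist (x i).val v.val ≤ k - 1 - i.val)) := by
    intro v _
    obtain ⟨i, hi⟩ := hx v
    rw [pathGraph_dist] at hi
    exact Finset.mem_biUnion.mpr ⟨i, Finset.mem_univ i, by simpa using hi⟩
  have hcard : ∀ i : Fin k,
      (Finset.univ.filter (fun v : Fin n =>
        Nat.dist (x i).val v.val ≤ k - 1 - i.val)).card ≤ 2 * (k - 1 - i.val) + 1 := by
    intro i
    set c := (x i).val
    set r := k - 1 - i.val
    have := Finset.card_le_card_of_injOn (f := fun v : Fin n => v.val)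
      (s := Finset.univ.filter (fun v : Fin n => Nat.dist c v.val ≤ r))
      (t := Finset.Icc (c - r) (c + r))
      (by
        intro v hv
        simp only [Finset.mem_coe, Finset.mem_filter, Finset.mem_univ, true_and] at hv
        simp only [Nat.dist] at hv
        simp only [Finset.mem_coe, Finset.mem_Icc]
        omega)
      (by intro a _ b _ hab; exact Fin.ext hab)
    have hIcc : (Finset.Icc (c - r) (c + r)).card = c + r + 1 - (c - r) := Nat.card_Icc _ _
    omega
  have hn' : n = (Finset.univ : Finset (Fin n)).card := (Finset.card_fin n).symm
  have h1 : (Finset.univ : Finset (Fin n)).card ≤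
      ∑ i : Fin k, (Finset.univ.filter (fun v : Fin n =>
        Nat.dist (x i).val v.val ≤ k - 1 - i.val)).card :=
    le_trans (Finset.card_le_card hsub) (Finset.card_biUnion_le)
  have h2 : ∑ i : Fin k, (Finset.univ.filter (fun v : Fin n =>
      Nat.dist (x i).val v.val ≤ k - 1 - i.val)).card ≤
      ∑ i : Fin k, (2 * (k - 1 - i.val) + 1) :=
    Finset.sum_le_sum fun i _ => hcard i
  have h3 : ∑ i : Fin k, (2 * (k - 1 - i.val) + 1) = k ^ 2 := by
    rw [Fin.sum_univ_eq_sum_range (fun i => 2 * (k - 1 - i) + 1)]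
    rw [Finset.sum_range_reflect (fun i => 2 * i + 1) k]
    exact sum_odd k
  omega

theorem burningNumber_pathGraph (n : ℕ) (hn : 1 ≤ n) :
    burningNumber (pathGraph n) = ⌈Real.sqrt (n : ℝ)⌉₊ := by
  set k := ⌈Real.sqrt (n : ℝ)⌉₊ with hkdef
  have hn0 : (0 : ℝ) < n := by exact_mod_cast hn
  have hk1 : 1 ≤ k := Nat.one_le_iff_ne_zero.mpr (by
    have : 0 < k := Nat.ceil_pos.mpr (Real.sqrt_pos.mpr hn0)
    omega)
  have hnk : n ≤ k ^ 2 := by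
    have h := Nat.le_ceil (Real.sqrt (n : ℝ))
    have hsq : Real.sqrt (n : ℝ) ^ 2 = n := Real.sq_sqrt (le_of_lt hn0)
    have : (n : ℝ) ≤ (k : ℝ) ^ 2 := by nlinarith [Real.sqrt_nonneg (n : ℝ)]
    exact_mod_cast this
  have hmem : k ∈ {m | ∃ x : Fin m → Fin n, IsBurningSequence (pathGraph n) x} :=
    burn_exists hn hk1 hnk
  apply le_antisymm
  · exact Nat.sInf_le hmem
  · refine le_csInf ⟨k, hmem⟩ fun m hm => ?_
    obtain ⟨x, hx⟩ := hm
    have hm2 : n ≤ m ^ 2 := burn_card x hx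
    refine Nat.ceil_le.mpr ?_
    have hcast : (n : ℝ) ≤ (m : ℝ) ^ 2 := by exact_mod_cast hm2
    calc Real.sqrt (n : ℝ) ≤ Real.sqrt ((m : ℝ) ^ 2) := Real.sqrt_le_sqrt hcast
      _ = m := Real.sqrt_sq (by positivity)
end

section
/- Let G be a finite connected simple graph. Then b(G) equals the minimum of b(T) over all spanning trees T of G; that is, b(G) = min{ b(T) : T is a spanning tree of G }. -/
open SimpleGraph

namespace BurningAux

open SimpleGraph Walk

variable {V : Type*}

/-- A "parent graph" whose parent map strictly decreases a measure is acyclic. -/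
lemma parentForest_isAcyclic (p : V → V) (D : Set V) (μ : V → ℕ)
    (hdec : ∀ a ∈ D, μ (p a) < μ a) :
    (SimpleGraph.fromRel (fun a b => a ∈ D ∧ p a = b)).IsAcyclic := by
  classical
  set F := SimpleGraph.fromRel (fun a b => a ∈ D ∧ p a = b) with hF
  intro a c hc
  obtain ⟨m, hm, hmax⟩ := Finset.exists_max_image c.support.toFinset μ
    ⟨a, List.mem_toFinset.mpr c.start_mem_support⟩
  rw [List.mem_toFinset] at hm
  have hmax' : ∀ u ∈ c.support, μ u ≤ μ m := fun u hu => hmax u (List.mem_toFinset.mpr hu)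
  set c' : F.Walk m m := c.rotate m hm with hc'def
  have hc' : c'.IsCycle := hc.rotate hm
  have hsub : ∀ u ∈ c'.support, μ u ≤ μ m := by
    intro u hu
    rw [c'.support_eq_cons] at hu
    rcases List.mem_cons.mp hu with rfl | hu
    · exact le_rfl
    · have hrot := Walk.support_rotate c m hm
      have : u ∈ c.support.tail := hrot.mem_iff.mp hu
      exact hmax' u (List.mem_of_mem_tail this)
  have hstep : ∀ b', F.Adj m b' → b' ∈ c'.support → m ∈ D ∧ p m = b' := by
    intro b' hadj' hmem
    rw [hF, SimpleGraph.fromRel_adj] at hadj'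
    rcases hadj'.2 with h1 | h1
    · exact h1
    · exfalso
      have hlt := hdec b' h1.1
      rw [h1.2] at hlt
      exact hlt.not_ge (hsub b' hmem)
  have hnn : ¬ c'.Nil := hc'.not_nil
  rw [Walk.not_nil_iff] at hnn
  obtain ⟨b, hadj, q, hq⟩ := hnn
  have hbmem : b ∈ c'.support := by
    rw [hq, Walk.support_cons]
    exact List.mem_cons_of_mem _ q.start_mem_support
  have h1 := hstep b hadj hbmem
  -- q is not nil since cycles have length ≥ 3
  have h3 := hc'.three_le_length
  have hqlen : q.length + 1 = c'.length := by rw [hq, Walk.length_cons]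
  have hqnn : ¬ q.reverse.Nil := by
    rw [Walk.not_nil_iff_lt_length, Walk.length_reverse]; omega
  rw [Walk.not_nil_iff] at hqnn
  obtain ⟨b2, hadj2, q2, hq2⟩ := hqnn
  have hb2mem : b2 ∈ c'.support := by
    have : b2 ∈ q.reverse.support := by
      rw [hq2, Walk.support_cons]
      exact List.mem_cons_of_mem _ q2.start_mem_support
    rw [Walk.support_reverse, List.mem_reverse] at this
    rw [hq, Walk.support_cons]
    exact List.mem_cons_of_mem _ this
  have h2 := hstep b2 hadj2 hb2mem
  have hbb : b2 = b := by rw [← h1.2, ← h2.2]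
  have hedge : s(m, b2) ∈ q.edges := by
    have : s(m, b2) ∈ q.reverse.edges := by
      rw [hq2, Walk.edges_cons]; exact List.mem_cons_self
    rwa [Walk.edges_reverse, List.mem_reverse] at this
  rw [hbb] at hedge
  have hnodup : c'.edges.Nodup := hc'.isCircuit.isTrail.edges_nodup
  rw [hq, Walk.edges_cons] at hnodup
  exact (List.nodup_cons.mp hnodup).1 hedge

/-- Any acyclic subgraph of a connected graph extends to a spanning tree. -/
lemma exists_tree_between [Fintype V] :
    ∀ (n : ℕ) (G F : SimpleGraph V), G.edgeSet.ncard ≤ n → G.Connected → F ≤ G →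
      F.IsAcyclic → ∃ T, F ≤ T ∧ T ≤ G ∧ T.IsTree := by
  intro n
  induction n with
  | zero =>
    intro G F hcard hG hFG hF
    have hempty : G.edgeSet = ∅ :=
      (Set.ncard_eq_zero (Set.toFinite _)).mp (Nat.le_zero.mp hcard)
    have hac : G.IsAcyclic := by
      intro v c hc
      cases c with
      | nil => exact hc.ne_nil rfl
      | cons h q =>
        have : s(v, _) ∈ G.edgeSet := (G.mem_edgeSet).mpr h
        rw [hempty] at this
        exact Set.notMem_empty _ this
    exact ⟨G, hFG, le_rfl, ⟨hG, hac⟩⟩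
  | succ n ih =>
    intro G F hcard hG hFG hF
    by_cases hac : G.IsAcyclic
    · exact ⟨G, hFG, le_rfl, ⟨hG, hac⟩⟩
    · simp only [IsAcyclic, not_forall, not_not] at hac
      obtain ⟨u, c, hc⟩ := hac
      have hexist : ∃ e ∈ c.edges, e ∉ F.edgeSet := by
        by_contra h
        push_neg at h
        exact hF (c.transfer F h) (hc.transfer h)
      obtain ⟨e, hec, heF⟩ := hexist
      revert hec heF
      induction e using Sym2.ind with
      | _ u₀ v₀ =>
      intro hec heF
      have he : s(u₀, v₀) ∈ G.edgeSet := c.edges_subset_edgeSet hec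
      set G' := G \ fromEdgeSet {s(u₀, v₀)} with hG'
      have hG'le : G' ≤ G := sdiff_le
      have hedge : G'.edgeSet = G.edgeSet \ {s(u₀, v₀)} := by
        rw [hG', edgeSet_sdiff, edgeSet_fromEdgeSet, edgeSet_sdiff_sdiff_isDiag]
      have hcard' : G'.edgeSet.ncard ≤ n := by
        rw [hedge]
        have := Set.ncard_diff_singleton_lt_of_mem he (Set.toFinite _)
        omega
      have hreach : G'.Reachable u₀ v₀ :=
        ((adj_and_reachable_delete_edges_iff_exists_cycle).mpr ⟨u, c, hc, hec⟩).2
      have hG'conn : G'.Connected := by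
        have hpre : G'.Preconnected := by
          intro a b
          obtain ⟨w⟩ := hG.preconnected a b
          induction w with
          | nil => exact Reachable.refl _
          | @cons p' q' r' h wq ihw =>
            refine Reachable.trans ?_ ihw
            by_cases hpe : s(p', q') = s(u₀, v₀)
            · rcases Sym2.eq_iff.mp hpe with ⟨rfl, rfl⟩ | ⟨rfl, rfl⟩
              · exact hreach
              · exact hreach.symm
            · refine SimpleGraph.Adj.reachable ?_
              rw [hG', sdiff_adj]
              refine ⟨h, fun hcon => ?_⟩
              rw [fromEdgeSet_adj, Set.mem_singleton_iff] at hcon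
              exact hpe hcon.1
        haveI := hG.nonempty
        exact ⟨hpre⟩
      have hFG' : F ≤ G' := by
        intro a b hab
        rw [hG', sdiff_adj]
        refine ⟨hFG hab, fun hcon => ?_⟩
        rw [fromEdgeSet_adj, Set.mem_singleton_iff] at hcon
        exact heF (hcon.1 ▸ (F.mem_edgeSet).mpr hab)
      obtain ⟨T, h1, h2, h3⟩ := ih G' F hcard' hG'conn hFG' hF
      exact ⟨T, h1, h2.trans hG'le, h3⟩

lemma isBurningSequence_of_le {T G : SimpleGraph V} (hle : T ≤ G) (hT : T.Connected)
    {k : ℕ} {x : Fin k → V} (hx : IsBurningSequence T x) : IsBurningSequence G x := by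
  intro v
  obtain ⟨i, hi⟩ := hx v
  refine ⟨i, le_trans ?_ hi⟩
  obtain ⟨w, hw⟩ := (hT.preconnected (x i) v).exists_walk_length_eq_dist
  calc G.dist (x i) v ≤ (w.mapLe hle).length := dist_le _
    _ = w.length := Walk.length_map _ _
    _ = T.dist (x i) v := hw

/-- Main construction: from a burning sequence for `G` one obtains a spanning tree of `G`
for which the same sequence is burning. -/
lemma exists_tree_burning [Fintype V] {G : SimpleGraph V} (hG : G.Connected)
    {k : ℕ} (x : Fin k → V) (hx : IsBurningSequence G x) :
    ∃ T, T ≤ G ∧ T.IsTree ∧ IsBurningSequence T x := by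
  classical
  set W : V → Set ℕ := fun v =>
    {n | ∃ j : Fin k, G.dist (x j) v ≤ k - 1 - j.val ∧ n = G.dist (x j) v + j.val} with hW
  have hWne : ∀ v, (W v).Nonempty := fun v => (hx v).elim fun j hj => ⟨_, j, hj, rfl⟩
  set μ : V → ℕ := fun v => sInf (W v) with hμ
  have hμmem : ∀ v, μ v ∈ W v := fun v => Nat.sInf_mem (hWne v)
  simp only [hW, Set.mem_setOf_eq] at hμmem
  choose j hj1 hj2 using hμmem
  have hμle : ∀ v (i : Fin k), G.dist (x i) v ≤ k - 1 - i.val →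
      μ v ≤ G.dist (x i) v + i.val := fun v i hi => Nat.sInf_le ⟨i, hi, rfl⟩
  have hμk : ∀ v, μ v ≤ k - 1 := by
    intro v
    have h1 := hj1 v
    have h2 := hj2 v
    have hjk : (j v).val < k := (j v).isLt
    omega
  set D : Set V := {v | G.dist (x (j v)) v ≠ 0} with hD
  have hpar : ∀ v ∈ D, ∃ u, G.Adj u v ∧ G.dist (x (j v)) u + 1 ≤ G.dist (x (j v)) v := by
    intro v hv
    obtain ⟨w, hw⟩ := (hG.preconnected (x (j v)) v).exists_walk_length_eq_dist
    have hv' : G.dist (x (j v)) v ≠ 0 := hv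
    have hnn : ¬ w.reverse.Nil := by
      rw [Walk.not_nil_iff_lt_length, Walk.length_reverse, hw]
      exact Nat.pos_of_ne_zero hv'
    rw [Walk.not_nil_iff] at hnn
    obtain ⟨u, hadj, q, hq⟩ := hnn
    refine ⟨u, hadj.symm, ?_⟩
    have hqd : G.dist (x (j v)) u ≤ q.length := by
      have := dist_le q.reverse
      rwa [Walk.length_reverse] at this
    have hlen : q.length + 1 = w.length := by
      have := congrArg Walk.length hq
      simp only [Walk.length_reverse, Walk.length_cons] at this
      omega
    omega
  set p : V → V := fun v => if h : v ∈ D then Classical.choose (hpar v h) else v with hp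
  have hp1 : ∀ v, v ∈ D → G.Adj (p v) v := by
    intro v h
    simp only [hp, dif_pos h]
    exact (Classical.choose_spec (hpar v h)).1
  have hp2 : ∀ v, v ∈ D → G.dist (x (j v)) (p v) + 1 ≤ G.dist (x (j v)) v := by
    intro v h
    simp only [hp, dif_pos h]
    exact (Classical.choose_spec (hpar v h)).2
  have hdec : ∀ v ∈ D, μ (p v) < μ v := by
    intro v hv
    have h2 := hp2 v hv
    have h1 := hj1 v
    have hmem : μ (p v) ≤ G.dist (x (j v)) (p v) + (j v).val :=
      hμle _ (j v) (by omega)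
    have h3 := hj2 v
    omega
  set F := SimpleGraph.fromRel (fun a b => a ∈ D ∧ p a = b) with hF
  have hFG : F ≤ G := by
    intro a b hab
    rw [hF, SimpleGraph.fromRel_adj] at hab
    rcases hab.2 with ⟨h1, rfl⟩ | ⟨h1, rfl⟩
    · exact (hp1 a h1).symm
    · exact hp1 b h1
  have hFac := parentForest_isAcyclic p D μ hdec
  have hroot : ∀ v, v ∉ D → ∃ (r : Fin k) (w : F.Walk (x r) v), w.length + r.val ≤ μ v := by
    intro v hv
    have hv0 : G.dist (x (j v)) v = 0 := by
      by_contra h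
      exact hv h
    have heq : x (j v) = v := (hG.dist_eq_zero_iff).mp hv0
    refine ⟨j v, (Walk.nil' v).copy heq.symm rfl, ?_⟩
    rw [Walk.length_copy]
    have := hj2 v
    simp only [Walk.length_nil]
    omega
  have key : ∀ (n : ℕ) (v : V), μ v ≤ n →
      ∃ (r : Fin k) (w : F.Walk (x r) v), w.length + r.val ≤ μ v := by
    intro n
    induction n with
    | zero =>
      intro v hv
      by_cases hvD : v ∈ D
      · exact absurd (hdec v hvD) (by omega)
      · exact hroot v hvD
    | succ n ihn =>
      intro v hv
      by_cases hvD : v ∈ D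
      · have hlt := hdec v hvD
        obtain ⟨r, w, hwl⟩ := ihn (p v) (by omega)
        have hadj : F.Adj (p v) v := by
          rw [hF, SimpleGraph.fromRel_adj]
          exact ⟨(hp1 v hvD).ne, Or.inr ⟨hvD, rfl⟩⟩
        refine ⟨r, w.concat hadj, ?_⟩
        rw [Walk.length_concat]
        omega
      · exact hroot v hvD
  obtain ⟨T, hFT, hTG, hTtree⟩ :=
    exists_tree_between (G.edgeSet.ncard) G F le_rfl hG hFG hFac
  refine ⟨T, hTG, hTtree, ?_⟩
  intro v
  obtain ⟨r, w, hwl⟩ := key (μ v) v le_rfl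
  refine ⟨r, ?_⟩
  have h1 : T.dist (x r) v ≤ w.length := by
    have := dist_le (w.mapLe hFT)
    rwa [Walk.length_map] at this
  have h2 := hμk v
  omega

end BurningAux

theorem burningNumber_eq_min_spanningTree {V : Type*} [Fintype V]
    (G : SimpleGraph V) (hG : G.Connected) :
    burningNumber G =
      sInf {b | ∃ T : SimpleGraph V, T ≤ G ∧ T.IsTree ∧ burningNumber T = b} := by
  classical
  haveI hne : Nonempty V := hG.nonempty
  -- the burning set of any connected graph on a fintype is nonempty
  have hBne : ∀ (H : SimpleGraph V), H.Connected →
      {k | ∃ x : Fin k → V, IsBurningSequence H x}.Nonempty := by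
    intro H hH
    obtain ⟨v₀⟩ := hne
    refine ⟨Fintype.card V, fun _ => v₀, fun v => ?_⟩
    have hcard : 0 < Fintype.card V := Fintype.card_pos_iff.mpr ⟨v₀⟩
    refine ⟨⟨0, hcard⟩, ?_⟩
    obtain ⟨w⟩ := hH.preconnected v₀ v
    have h1 : H.dist v₀ v ≤ (w.toPath : H.Walk v₀ v).length := SimpleGraph.dist_le _
    have h2 : (w.toPath : H.Walk v₀ v).length < Fintype.card V :=
      (w.toPath.2).length_lt
    simp only [Nat.sub_zero]
    omega
  have hGmem : burningNumber G ∈ {k | ∃ x : Fin k → V, IsBurningSequence G x} :=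
    Nat.sInf_mem (hBne G hG)
  obtain ⟨x, hx⟩ := hGmem
  obtain ⟨T₀, hT₀G, hT₀tree, hxT₀⟩ := BurningAux.exists_tree_burning hG x hx
  set S := {b | ∃ T : SimpleGraph V, T ≤ G ∧ T.IsTree ∧ burningNumber T = b} with hS
  have hSne : S.Nonempty := ⟨burningNumber T₀, T₀, hT₀G, hT₀tree, rfl⟩
  have hle1 : sInf S ≤ burningNumber G := by
    have hA : sInf S ≤ burningNumber T₀ := Nat.sInf_le ⟨T₀, hT₀G, hT₀tree, rfl⟩
    have hB : burningNumber T₀ ≤ burningNumber G := Nat.sInf_le ⟨x, hxT₀⟩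
    omega
  have hle2 : burningNumber G ≤ sInf S := by
    obtain ⟨T, hTG, hTtree, hTb⟩ := Nat.sInf_mem hSne
    have hTconn : T.Connected := hTtree.isConnected
    have hTmem : burningNumber T ∈ {k | ∃ y : Fin k → V, IsBurningSequence T y} :=
      Nat.sInf_mem (hBne T hTconn)
    obtain ⟨y, hy⟩ := hTmem
    have hyG : IsBurningSequence G y := BurningAux.isBurningSequence_of_le hTG hTconn hy
    have : burningNumber G ≤ burningNumber T := Nat.sInf_le ⟨y, hyG⟩
    omega
  omega
end

section
/- Let T be a finite tree and let T₀ be a subtree of T (a connected subgraph of T that is itself a tree). Then b(T₀) ≤ b(T). -/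
open SimpleGraph

section Aux
variable {V : Type*} {T : SimpleGraph V}

lemma subtree_dist_le (hT : T.IsTree) (S : T.Subgraph) (hS : S.coe.Connected)
    (u v : S.verts) : S.coe.dist u v ≤ T.dist ↑u ↑v := by
  obtain ⟨p, hp, hlen⟩ := hS.exists_path_of_dist u v
  have hq : (p.map S.hom).IsPath :=
    p.map_isPath_of_injective Subtype.val_injective hp
  obtain ⟨g, hg, hglen⟩ := hT.isConnected.exists_path_of_dist (↑u) (↑v)
  have heq : p.map S.hom = g := (hT.existsUnique_path (↑u) (↑v)).unique hq hg
  calc S.coe.dist u v ≤ p.length := dist_le p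
    _ = (p.map S.hom).length := (Walk.length_map _ _).symm
    _ = g.length := by rw [heq]; rfl
    _ = T.dist ↑u ↑v := hglen

lemma gate (hT : T.IsTree) (S : T.Subgraph) (hS : S.coe.Connected) :
    ∀ n (a : V), (∃ w ∈ S.verts, T.dist a w ≤ n) →
      ∃ w ∈ S.verts, ∀ v ∈ S.verts, T.dist w v ≤ T.dist a v := by
  intro n
  induction n with
  | zero =>
    rintro a ⟨w, hw, hd⟩
    have : a = w := (hT.isConnected.dist_eq_zero_iff).mp (Nat.le_zero.mp hd)
    exact ⟨a, this ▸ hw, fun v _ => le_rfl⟩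
  | succ n ih =>
    classical
    rintro a ⟨w, hw, hd⟩
    by_cases ha : a ∈ S.verts
    · exact ⟨a, ha, fun v _ => le_rfl⟩
    · have haw : a ≠ w := fun h => ha (h ▸ hw)
      obtain ⟨P, hP, hPlen⟩ := (hT.isConnected).exists_path_of_dist a w
      cases P with
      | nil => exact absurd rfl haw
      | @cons _ b _ hab P' =>
        -- dist from b to w is small
        have hPlen' : P'.length + 1 = T.dist a w := by simpa using hPlen
        have hbw : T.dist b w ≤ n := by
          have := dist_le P'
          omega
        -- key: for every v in S.verts, dist b v ≤ dist a v
        have key : ∀ v ∈ S.verts, T.dist b v ≤ T.dist a v := by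
          intro v hv
          have hav : a ≠ v := fun h => ha (h ▸ hv)
          obtain ⟨Q, hQ, hQlen⟩ := (hT.isConnected).exists_path_of_dist a v
          cases Q with
          | nil => exact absurd rfl hav
          | @cons _ c _ hac Q' =>
            obtain ⟨R₀⟩ := hS ⟨v, hv⟩ ⟨w, hw⟩
            set R : T.Walk v w := R₀.map S.hom with hR
            set W : T.Walk a w := (Walk.cons hac Q').append R with hW
            have hWb : W.bypass = Walk.cons hab P' :=
              (hT.existsUnique_path a w).unique W.bypass_isPath hP
            have hmem : s(a, b) ∈ W.edges := by
              apply Walk.edges_bypass_subset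
              rw [hWb, Walk.edges_cons]
              exact List.mem_cons_self
            have hbc : b = c := by
              rw [hW, Walk.cons_append, Walk.edges_cons] at hmem
              rcases List.mem_cons.mp hmem with h | h
              · rcases Sym2.eq_iff.mp h with ⟨-, h⟩ | ⟨h1, h2⟩
                · exact h
                · exact absurd h1 hac.ne
              · exfalso
                have haS : a ∈ (Q'.append R).support :=
                  Walk.fst_mem_support_of_mem_edges _ h
                rcases (Walk.mem_support_append_iff _ _).mp haS with h' | h'
                · exact ((Walk.cons_isPath_iff hac Q').mp hQ).2 h'
                · replace h' : a ∈ (R₀.map S.hom).support := h'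
                  rw [Walk.support_map] at h'
                  obtain ⟨x, hx, hxa⟩ := List.mem_map.mp h'
                  exact ha (hxa ▸ x.2)
            subst hbc
            calc T.dist b v ≤ Q'.length := dist_le Q'
              _ ≤ (Walk.cons hac Q').length := by simp
              _ = T.dist a v := hQlen
        obtain ⟨w', hw', hall⟩ := ih b ⟨w, hw, hbw⟩
        exact ⟨w', hw', fun v hv => (hall v hv).trans (key v hv)⟩

end Aux

theorem burningNumber_subtree_le {V : Type*} [Fintype V] (T : SimpleGraph V)
    (hT : T.IsTree) (T₀ : T.Subgraph) (hT₀ : T₀.coe.IsTree) :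
    burningNumber T₀.coe ≤ burningNumber T := by
  classical
  have hconn := hT.isConnected
  have hSconn := hT₀.isConnected
  have hTne : ∃ k, ∃ x : Fin k → V, IsBurningSequence T x := by
    obtain ⟨v₀⟩ := hconn.nonempty
    refine ⟨(Finset.univ.sup fun v => T.dist v₀ v) + 1, fun _ => v₀, fun v => ?_⟩
    refine ⟨⟨0, Nat.succ_pos _⟩, ?_⟩
    simpa using Finset.le_sup (f := fun v => T.dist v₀ v) (Finset.mem_univ v)
  have hmem : ∃ x : Fin (burningNumber T) → V, IsBurningSequence T x :=
    Nat.sInf_mem hTne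
  obtain ⟨x, hx⟩ := hmem
  obtain ⟨w₀⟩ := hSconn.nonempty
  have hret : ∀ a : V, ∃ w ∈ T₀.verts, ∀ v ∈ T₀.verts, T.dist w v ≤ T.dist a v :=
    fun a => gate hT T₀ hSconn (T.dist a ↑w₀) a ⟨↑w₀, w₀.2, le_rfl⟩
  choose r hr hr' using hret
  refine Nat.sInf_le ⟨fun i => ⟨r (x i), hr (x i)⟩, fun v => ?_⟩
  obtain ⟨i, hi⟩ := hx ↑v
  exact ⟨i, le_trans (le_trans (subtree_dist_le hT T₀ hSconn _ v)
    ((hr' (x i) ↑v v.2))) hi⟩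
end

section
/- Let T be a finite tree of order n ≥ 3 and let p be a real number with 1 ≤ p < n − 1. Then there exist a vertex v of T of degree at least 2 and a neighbor w of v such that the connected component of T − vw containing v has more than p vertices, while for every neighbor u of v with u ≠ w, the connected component of T − vu containing u has at most p vertices. -/
open SimpleGraph

private lemma tree_not_reach_del {V : Type*} {T : SimpleGraph V} (hT : T.IsTree)
    {v w : V} (h : T.Adj v w) : ¬ (T.deleteEdges {s(v, w)}).Reachable v w := by
  have hb : T.IsBridge s(v, w) :=
    (isAcyclic_iff_forall_adj_isBridge.1 hT.IsAcyclic) h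
  exact isBridge_iff.1 hb

private lemma tree_reach_aux {V : Type*} {T : SimpleGraph V} (v w : V) :
    ∀ {x y : V}, T.Walk x y →
      (T.deleteEdges {s(v, w)}).Reachable x v ∨ (T.deleteEdges {s(v, w)}).Reachable x w ∨
        (T.deleteEdges {s(v, w)}).Reachable x y := by
  intro x y q
  induction q with
  | nil => exact Or.inr (Or.inr (Reachable.refl _))
  | @cons a b c h q ih =>
    by_cases he : s(a, b) = s(v, w)
    · rw [Sym2.eq_iff] at he
      rcases he with ⟨rfl, rfl⟩ | ⟨rfl, rfl⟩
      · exact Or.inl (Reachable.refl _)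
      · exact Or.inr (Or.inl (Reachable.refl _))
    · have hadj : (T.deleteEdges {s(v, w)}).Adj a b := by
        rw [deleteEdges_adj]
        exact ⟨h, by simpa using he⟩
      rcases ih with h1 | h1 | h1
      · exact Or.inl (hadj.reachable.trans h1)
      · exact Or.inr (Or.inl (hadj.reachable.trans h1))
      · exact Or.inr (Or.inr (hadj.reachable.trans h1))

private lemma tree_reach_or {V : Type*} {T : SimpleGraph V} (hc : T.Connected)
    (v w x : V) :
    (T.deleteEdges {s(v, w)}).Reachable x v ∨ (T.deleteEdges {s(v, w)}).Reachable x w := by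
  obtain ⟨q⟩ := hc x v
  rcases tree_reach_aux v w q with h | h | h
  · exact Or.inl h
  · exact Or.inr h
  · exact Or.inl h

/-- Key subset lemma. -/
private lemma comp_subset {V : Type*} {T : SimpleGraph V} (hT : T.IsTree)
    {v w u : V} (hvw : T.Adj v w) (hvu : T.Adj v u) (huw : u ≠ w) :
    ((T.deleteEdges {s(u, v)}).connectedComponentMk u).supp ⊆
      ((T.deleteEdges {s(v, w)}).connectedComponentMk v).supp \ {v} := by
  classical
  intro x hx
  rw [ConnectedComponent.mem_supp_iff, ConnectedComponent.eq] at hx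
  obtain ⟨q⟩ := hx.symm
  -- q : walk from u to x in T - uv
  have hnr : ¬ (T.deleteEdges {s(u, v)}).Reachable u v := by
    rw [Sym2.eq_swap (a := u)]
    intro hr
    exact tree_not_reach_del hT hvu hr.symm
  have hvsup : v ∉ q.support := by
    intro hv
    exact hnr ⟨q.takeUntil v hv⟩
  have hedge : ∀ e ∈ q.edges, e ∈ (T.deleteEdges {s(v, w)}).edgeSet := by
    intro e he
    have h1 : e ∈ (T.deleteEdges {s(u, v)}).edgeSet := q.edges_subset_edgeSet he
    rw [edgeSet_deleteEdges] at h1 ⊢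
    refine ⟨h1.1, ?_⟩
    simp only [Set.mem_singleton_iff]
    rintro rfl
    exact hvsup (q.fst_mem_support_of_mem_edges he)
  have hxu : (T.deleteEdges {s(v, w)}).Reachable u x := ⟨q.transfer _ hedge⟩
  have huvadj : (T.deleteEdges {s(v, w)}).Adj v u := by
    rw [deleteEdges_adj]
    refine ⟨hvu, ?_⟩
    simp only [Set.mem_singleton_iff, Sym2.eq_iff]
    rintro (⟨-, h⟩ | ⟨h, -⟩)
    · exact huw h
    · exact hvw.ne h
  constructor
  · rw [ConnectedComponent.mem_supp_iff, ConnectedComponent.eq]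
    exact (huvadj.reachable.trans hxu).symm
  · simp only [Set.mem_singleton_iff]
    rintro rfl
    exact hvsup q.end_mem_support

private lemma tree_exists_leaf {V : Type*} [Fintype V] (T : SimpleGraph V)
    [DecidableRel T.Adj] (hT : T.IsTree) (h2 : 2 ≤ Fintype.card V) :
    ∃ w, T.degree w = 1 := by
  classical
  by_contra hno
  push_neg at hno
  have hdeg : ∀ w : V, 2 ≤ T.degree w := by
    intro w
    have hpos : 0 < T.degree w := by
      rw [degree_pos_iff_exists_adj]
      obtain ⟨x, hx⟩ := Fintype.exists_ne_of_one_lt_card (by omega) w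
      obtain ⟨q⟩ := hT.isConnected w x
      cases q with
      | nil => exact absurd rfl hx
      | cons h q => exact ⟨_, h⟩
    have := hno w
    omega
  have hcard := hT.card_edgeFinset
  have hsum : ∑ v : V, T.degree v = 2 * T.edgeFinset.card :=
    sum_degrees_eq_twice_card_edges T
  have hlb : Fintype.card V * 2 ≤ ∑ v : V, T.degree v := by
    calc Fintype.card V * 2 = ∑ _v : V, 2 := by simp [mul_comm]
      _ ≤ ∑ v, T.degree v := Finset.sum_le_sum fun i _ => hdeg i
  omega

theorem tree_separating_vertex {V : Type*} [Fintype V] (T : SimpleGraph V)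
    [DecidableRel T.Adj] (hT : T.IsTree)
    (n : ℕ) (hn : n = Fintype.card V) (hn3 : 3 ≤ n)
    (p : ℝ) (hp1 : 1 ≤ p) (hp2 : p < (n : ℝ) - 1) :
    ∃ v w : V, T.Adj v w ∧ 2 ≤ T.degree v ∧
      p < (((T.deleteEdges {s(v, w)}).connectedComponentMk v).supp.ncard : ℝ) ∧
      ∀ u : V, T.Adj v u → u ≠ w →
        ((((T.deleteEdges {s(v, u)}).connectedComponentMk u).supp.ncard : ℝ) ≤ p) := by
  classical
  set f : V × V → ℕ :=
    fun q => ((T.deleteEdges {s(q.1, q.2)}).connectedComponentMk q.1).supp.ncard with hf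
  set S : Finset (V × V) :=
    Finset.univ.filter (fun q => T.Adj q.1 q.2 ∧ p < (f q : ℝ)) with hSdef
  -- find a leaf to show S is nonempty
  obtain ⟨w0, hw0⟩ := tree_exists_leaf T hT (by omega)
  obtain ⟨v0, hv0⟩ := (degree_pos_iff_exists_adj T w0).1 (by omega)
  -- w0 is isolated in T - v0w0
  have hw0nb : ∀ y, T.Adj w0 y → y = v0 := by
    intro y hy
    have h1 : y ∈ T.neighborFinset w0 := by simpa using hy
    have h2 : v0 ∈ T.neighborFinset w0 := by simpa using hv0
    have hc : (T.neighborFinset w0).card = 1 := hw0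
    rw [Finset.card_eq_one] at hc
    obtain ⟨a, ha⟩ := hc
    rw [ha, Finset.mem_singleton] at h1 h2
    rw [h1, h2]
  have hiso : ∀ x, (T.deleteEdges {s(v0, w0)}).Reachable w0 x → x = w0 := by
    intro x hr
    obtain ⟨q⟩ := hr
    cases q with
    | nil => rfl
    | cons h q =>
      rw [deleteEdges_adj] at h
      exfalso
      have hb := hw0nb _ h.1
      apply h.2
      rw [hb, Set.mem_singleton_iff, Sym2.eq_swap]
  have hsupp : ((T.deleteEdges {s(v0, w0)}).connectedComponentMk v0).supp =
      Set.univ \ {w0} := by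
    ext x
    simp only [ConnectedComponent.mem_supp_iff, ConnectedComponent.eq, Set.mem_diff,
      Set.mem_univ, Set.mem_singleton_iff, true_and]
    constructor
    · intro hx hxw
      subst hxw
      exact hv0.ne (hiso _ hx).symm
    · intro hx
      rcases tree_reach_or hT.isConnected v0 w0 x with h | h
      · exact h
      · exact absurd (hiso _ h.symm) hx
  have hSne : (v0, w0) ∈ S := by
    rw [hSdef, Finset.mem_filter]
    refine ⟨Finset.mem_univ _, hv0.symm, ?_⟩
    have : f (v0, w0) = Fintype.card V - 1 := by
      rw [hf]
      simp only
      rw [hsupp, Set.ncard_diff_singleton_of_mem (Set.mem_univ _), Set.ncard_univ,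
        Nat.card_eq_fintype_card]
    rw [this]
    have h1 : (1 : ℕ) ≤ Fintype.card V := by omega
    rw [Nat.cast_sub h1, ← hn]
    exact_mod_cast hp2
  obtain ⟨⟨v, w⟩, hmem, hmin⟩ := S.exists_min_image f ⟨_, hSne⟩
  rw [hSdef, Finset.mem_filter] at hmem
  obtain ⟨-, hvw, hfp⟩ := hmem
  have hvsupp : v ∈ ((T.deleteEdges {s(v, w)}).connectedComponentMk v).supp := by
    rw [ConnectedComponent.mem_supp_iff]
  -- the forall part
  have hforall : ∀ u : V, T.Adj v u → u ≠ w →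
      ((((T.deleteEdges {s(v, u)}).connectedComponentMk u).supp.ncard : ℝ) ≤ p) := by
    intro u hadj hne
    by_contra hlt
    push_neg at hlt
    rw [Sym2.eq_swap] at hlt
    have hmemS : (u, v) ∈ S := by
      rw [hSdef, Finset.mem_filter]
      exact ⟨Finset.mem_univ _, hadj.symm, hlt⟩
    have h1 := hmin (u, v) hmemS
    have hsub := comp_subset hT hvw hadj hne
    have h2 : f (u, v) ≤
        (((T.deleteEdges {s(v, w)}).connectedComponentMk v).supp \ {v}).ncard :=
      Set.ncard_le_ncard hsub (Set.toFinite _)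
    have h3 := Set.ncard_diff_singleton_lt_of_mem hvsupp (Set.toFinite _)
    have : f (v, w) = ((T.deleteEdges {s(v, w)}).connectedComponentMk v).supp.ncard := rfl
    omega
  -- degree bound
  have h1lt : 1 < f (v, w) := by
    have : (1 : ℝ) < (f (v, w) : ℝ) := lt_of_le_of_lt hp1 hfp
    exact_mod_cast this
  obtain ⟨x, hx, hxv⟩ := Set.exists_ne_of_one_lt_ncard h1lt v
  rw [ConnectedComponent.mem_supp_iff, ConnectedComponent.eq] at hx
  obtain ⟨q⟩ := hx.symm
  have hdeg : 2 ≤ T.degree v := by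
    cases q with
    | nil => exact absurd rfl hxv.symm
    | @cons _ b _ h q =>
      rw [deleteEdges_adj] at h
      have hbw : b ≠ w := by
        rintro rfl
        exact h.2 rfl
      have hsubnb : ({w, b} : Finset V) ⊆ T.neighborFinset v := by
        intro y hy
        rw [Finset.mem_insert, Finset.mem_singleton] at hy
        rw [mem_neighborFinset]
        rcases hy with rfl | rfl
        · exact hvw
        · exact h.1
      calc 2 = ({w, b} : Finset V).card := (Finset.card_pair (Ne.symm hbw)).symm
        _ ≤ (T.neighborFinset v).card := Finset.card_le_card hsubnb
        _ = T.degree v := rfl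
  exact ⟨v, w, hvw, hdeg, hfp, hforall⟩
end

section
/- Let n ≥ 2 be an integer and let n₂ be an integer with 0 ≤ n₂ ≤ ⌊√(n−1)⌋. Then ⌈√(n + n₂ − ⌈√(n + n₂ + 1/4) − 3/2⌉)⌉ ≤ ⌈√n⌉. -/
theorem ceil_sqrt_ineq (n n₂ : ℕ) (hn : 2 ≤ n)
    (hn₂ : (n₂ : ℤ) ≤ ⌊Real.sqrt ((n : ℝ) - 1)⌋) :
    ⌈Real.sqrt ((n : ℝ) + n₂ -
        (⌈Real.sqrt ((n : ℝ) + n₂ + 1/4) - 3/2⌉ : ℤ))⌉₊ ≤ ⌈Real.sqrt (n : ℝ)⌉₊ := by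
  set m := ⌈Real.sqrt (n : ℝ)⌉₊ with hm
  set c : ℤ := ⌈Real.sqrt ((n : ℝ) + n₂ + 1/4) - 3/2⌉ with hcdef
  have hn2 : (2:ℝ) ≤ (n:ℝ) := by exact_mod_cast hn
  have hm1 : 1 ≤ m := by
    have h : (0:ℝ) < Real.sqrt n := Real.sqrt_pos.2 (by linarith)
    exact Nat.one_le_ceil_iff.2 h
  have hnm : (n : ℝ) ≤ (m:ℝ)^2 := by
    have h1 : Real.sqrt n ≤ m := Nat.le_ceil _
    calc (n:ℝ) = (Real.sqrt n)^2 := (Real.sq_sqrt (by linarith)).symm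
    _ ≤ (m:ℝ)^2 := pow_le_pow_left₀ (Real.sqrt_nonneg _) h1 2
  have hnmZ : (n:ℤ) ≤ (m:ℤ)^2 := by exact_mod_cast hnm
  -- n₂ ≤ m - 1
  have hfloor : ⌊Real.sqrt ((n : ℝ) - 1)⌋ < (m:ℤ) := by
    rw [Int.floor_lt]
    have : Real.sqrt ((n:ℝ) - 1) < (m:ℝ) := by
      rw [show (m:ℝ) = Real.sqrt ((m:ℝ)^2) by
        rw [Real.sqrt_sq (by positivity)]]
      apply Real.sqrt_lt_sqrt (by linarith)
      linarith
    exact_mod_cast this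
  have hn₂m : (n₂:ℤ) ≤ (m:ℤ) - 1 := by omega
  have hkey : (n:ℤ) + n₂ ≤ (m:ℤ)^2 + m - 1 := by omega
  -- main: n + n₂ - c ≤ m²
  have hc : (n:ℤ) + n₂ - c ≤ (m:ℤ)^2 := by
    have hlt : ((n:ℤ) + n₂ - m^2 - 1) < c := by
      rw [hcdef, Int.lt_ceil]
      push_cast
      rcases le_or_gt ((n:ℤ) + n₂) ((m:ℤ)^2) with h | h
      · have hR : (n:ℝ) + n₂ ≤ (m:ℝ)^2 := by exact_mod_cast h
        have hs : (3/2 : ℝ) ≤ Real.sqrt ((n:ℝ) + n₂ + 1/4) := by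
          rw [show (3/2:ℝ) = Real.sqrt ((3/2)^2) by rw [Real.sqrt_sq]; norm_num]
          apply Real.sqrt_le_sqrt
          have : (0:ℝ) ≤ (n₂:ℝ) := by positivity
          norm_num; linarith
        linarith
      · have hd1 : (1:ℤ) ≤ (n:ℤ) + n₂ - m^2 := by omega
        have hdm : (n:ℤ) + n₂ - m^2 ≤ (m:ℤ) - 1 := by omega
        have hd1R : (1:ℝ) ≤ (n:ℝ) + n₂ - (m:ℝ)^2 := by exact_mod_cast hd1
        have hdmR : (n:ℝ) + n₂ - (m:ℝ)^2 ≤ (m:ℝ) - 1 := by exact_mod_cast hdm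
        set d : ℝ := (n:ℝ) + n₂ - (m:ℝ)^2 with hd
        have hs : d + 1/2 < Real.sqrt ((n:ℝ) + n₂ + 1/4) := by
          rw [show Real.sqrt ((n:ℝ) + n₂ + 1/4)
              = Real.sqrt ((m:ℝ)^2 + d + 1/4) by rw [hd]; ring_nf]
          refine (Real.lt_sqrt (by linarith)).2 ?_
          nlinarith
        linarith
    omega
  -- finish
  rw [Nat.ceil_le]
  have hcR : (n:ℝ) + n₂ - c ≤ (m:ℝ)^2 := by exact_mod_cast hc
  calc Real.sqrt ((n:ℝ) + n₂ - c) ≤ Real.sqrt ((m:ℝ)^2) := Real.sqrt_le_sqrt hcR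
  _ = (m:ℝ) := Real.sqrt_sq (by positivity)
end
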